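/- arXiv:math/0603278 — 7 statements merged into one kernel-verified Lean document; each statement's English description precedes it below -/
import Mathlib

section
/- Let $n \geq 1$ and $\delta$ be positive integers, let $r_1, \dots, r_n$ be strictly positive integers, and let $T$ be a nonnegative integer with $T \leq \frac{1}{r_1} + \dots + \frac{1}{r_n}$. Then the set $C := \{(\alpha_1, \dots, \alpha_n) \in \mathbb{N}^n : \frac{\alpha_1}{r_1} + \dots + \frac{\alpha_n}{r_n} \leq \delta\}$ is finite and satisfies $r_1 \cdots r_n \binom{\delta + T}{n} \leq \#C \leq r_1 \cdots r_n \binom{\delta + n}{n}$. -/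
open Finset

/-- The finset of tuples with sum at most `m`. -/
def Qset (n m : ℕ) : Finset (Fin n → ℕ) :=
  (Fintype.piFinset fun _ => Finset.range (m + 1)).filter fun q => ∑ i, q i ≤ m

lemma mem_Qset {n m : ℕ} {q : Fin n → ℕ} : q ∈ Qset n m ↔ ∑ i, q i ≤ m := by
  simp only [Qset, Finset.mem_filter, Fintype.mem_piFinset, Finset.mem_range, Nat.lt_succ_iff]
  refine ⟨fun h => h.2, fun h => ⟨fun i => le_trans ?_ h, h⟩⟩
  exact Finset.single_le_sum (f := q) (fun i _ => Nat.zero_le _) (Finset.mem_univ i)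

lemma card_Qset (n m : ℕ) : (Qset n m).card = (m + n).choose n := by
  induction n generalizing m with
  | zero =>
    rw [Nat.choose_zero_right, Finset.card_eq_one]
    refine ⟨fun i => i.elim0, ?_⟩
    ext q
    simp only [mem_Qset, Finset.mem_singleton]
    constructor
    · intro _; funext i; exact i.elim0
    · intro _; simp
  | succ n ih =>
    have hsplit : Qset (n + 1) m =
        (Finset.range (m + 1)).biUnion fun j => (Qset n (m - j)).image
          (fun p => (Fin.cons j p : Fin (n + 1) → ℕ)) := by
      ext q
      simp only [mem_Qset, Finset.mem_biUnion, Finset.mem_range, Finset.mem_image,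
        Nat.lt_succ_iff]
      constructor
      · intro h
        refine ⟨q 0, ?_, Fin.tail q, ?_, Fin.cons_self_tail q⟩
        · calc q 0 ≤ ∑ i, q i :=
              Finset.single_le_sum (f := q) (fun i _ => Nat.zero_le _) (Finset.mem_univ 0)
            _ ≤ m := h
        · have h2 := h
          rw [Fin.sum_univ_succ] at h2
          simp only [Fin.tail]
          omega
      · rintro ⟨j, hj, p, hp, rfl⟩
        rw [Fin.sum_univ_succ]
        simp only [Fin.cons_zero, Fin.cons_succ]
        omega
    rw [hsplit, Finset.card_biUnion]
    · have hcard : ∀ j ∈ Finset.range (m + 1),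
          ((Qset n (m - j)).image
            (fun p => (Fin.cons j p : Fin (n + 1) → ℕ))).card = ((m - j) + n).choose n := by
        intro j _
        rw [Finset.card_image_of_injective _
          (Fin.cons_right_injective (α := fun _ => ℕ) j), ih]
      rw [Finset.sum_congr rfl hcard]
      have := Finset.sum_range_reflect (fun i => (i + n).choose n) (m + 1)
      simp only [Nat.add_sub_cancel] at this
      calc ∑ j ∈ Finset.range (m + 1), ((m - j) + n).choose n
          = ∑ j ∈ Finset.range (m + 1), (j + n).choose n := this
        _ = (m + n + 1).choose (n + 1) := Nat.sum_range_add_choose m n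
        _ = (m + (n + 1)).choose (n + 1) := by ring_nf
    · intro a _ b _ hab
      simp only [Finset.disjoint_left, Finset.mem_image]
      rintro q ⟨p, _, rfl⟩ ⟨p', _, hq⟩
      apply hab
      have := congrFun hq 0
      simpa using this.symm

theorem stmt_2 (n δ T : ℕ) (hn : 1 ≤ n) (hδ : 1 ≤ δ)
    (r : Fin n → ℕ) (hr : ∀ i, 0 < r i)
    (hT : (T : ℚ) ≤ ∑ i, (1 : ℚ) / (r i : ℚ)) :
    {α : Fin n → ℕ | ∑ i, (α i : ℚ) / (r i : ℚ) ≤ (δ : ℚ)}.Finite ∧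
    (∏ i, r i) * Nat.choose (δ + T) n ≤
      Nat.card {α : Fin n → ℕ | ∑ i, (α i : ℚ) / (r i : ℚ) ≤ (δ : ℚ)} ∧
    Nat.card {α : Fin n → ℕ | ∑ i, (α i : ℚ) / (r i : ℚ) ≤ (δ : ℚ)} ≤
      (∏ i, r i) * Nat.choose (δ + n) n := by
  set C : Set (Fin n → ℕ) := {α : Fin n → ℕ | ∑ i, (α i : ℚ) / (r i : ℚ) ≤ (δ : ℚ)} with hC
  have hrQ : ∀ i, (0 : ℚ) < (r i : ℚ) := fun i => by exact_mod_cast hr i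
  -- each coordinate is bounded
  have hcoord : ∀ α ∈ C, ∀ i, α i ≤ δ * r i := by
    intro α hα i
    have h1 : (α i : ℚ) / (r i : ℚ) ≤ (δ : ℚ) := by
      refine le_trans ?_ hα
      exact Finset.single_le_sum (f := fun i => (α i : ℚ) / (r i : ℚ))
        (fun j _ => div_nonneg (Nat.cast_nonneg _) (Nat.cast_nonneg _)) (Finset.mem_univ i)
    rw [div_le_iff₀ (hrQ i)] at h1
    exact_mod_cast h1
  have hfin : C.Finite := by
    have hpi : (Set.pi Set.univ fun i => Set.Iic (δ * r i)).Finite :=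
      Set.Finite.pi fun i => Set.finite_Iic _
    refine hpi.subset ?_
    intro α hα
    simp only [Set.mem_pi, Set.mem_univ, Set.mem_Iic, forall_true_left]
    exact fun i => hcoord α hα i
  have : Finite C := hfin.to_subtype
  refine ⟨hfin, ?_, ?_⟩
  -- LOWER BOUND
  · rcases lt_or_ge (δ + T) n with hlt | hge
    · rw [Nat.choose_eq_zero_of_lt hlt, Nat.mul_zero]
      exact Nat.zero_le _
    · set m := δ + T - n with hm
      have hmn : m + n = δ + T := by omega
      -- injection from Qset n m × Π Fin (r i) into C
      have key : ∀ (q : {q // q ∈ Qset n m}) (s : ∀ i, Fin (r i)),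
          (fun i => r i * q.1 i + (s i).1) ∈ C := by
        intro q s
        have hq : ∑ i, q.1 i ≤ m := mem_Qset.mp q.2
        simp only [hC, Set.mem_setOf_eq]
        have heq : ∀ i, ((r i * q.1 i + (s i).1 : ℕ) : ℚ) / (r i : ℚ)
            = (q.1 i : ℚ) + ((s i).1 : ℚ) / (r i : ℚ) := by
          intro i
          push_cast
          rw [add_div, mul_comm, mul_div_assoc, div_self (ne_of_gt (hrQ i)), mul_one]
        rw [Finset.sum_congr rfl (fun i _ => heq i), Finset.sum_add_distrib]
        have hs : ∀ i, ((s i).1 : ℚ) / (r i : ℚ) ≤ 1 - 1 / (r i : ℚ) := by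
          intro i
          have h1 : ((s i).1 : ℚ) ≤ (r i : ℚ) - 1 := by
            have := (s i).2
            have : (s i).1 + 1 ≤ r i := this
            have : (((s i).1 : ℚ) + 1) ≤ (r i : ℚ) := by exact_mod_cast this
            linarith
          rw [div_le_iff₀ (hrQ i), sub_mul, one_mul, div_mul_cancel₀ _ (ne_of_gt (hrQ i))]
          linarith
        have h2 : ∑ i, ((s i).1 : ℚ) / (r i : ℚ) ≤ (n : ℚ) - ∑ i, (1 : ℚ) / (r i : ℚ) := by
          calc ∑ i, ((s i).1 : ℚ) / (r i : ℚ) ≤ ∑ i, (1 - 1 / (r i : ℚ)) :=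
                Finset.sum_le_sum fun i _ => hs i
            _ = (n : ℚ) - ∑ i, (1 : ℚ) / (r i : ℚ) := by
                rw [Finset.sum_sub_distrib]
                simp [Finset.card_univ]
        have h3 : (∑ i, (q.1 i : ℚ)) ≤ (m : ℚ) := by
          have : ((∑ i, q.1 i : ℕ) : ℚ) ≤ (m : ℚ) := by exact_mod_cast hq
          rwa [Nat.cast_sum] at this
        have h4 : (m : ℚ) + ((n : ℚ) - (T : ℚ)) = (δ : ℚ) := by
          have : ((m + n : ℕ) : ℚ) = ((δ + T : ℕ) : ℚ) := by rw [hmn]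
          push_cast at this
          linarith
        linarith
      let g : ({q // q ∈ Qset n m} × ∀ i, Fin (r i)) → C :=
        fun p => ⟨fun i => r i * p.1.1 i + (p.2 i).1, key p.1 p.2⟩
      have hg : Function.Injective g := by
        rintro ⟨q, s⟩ ⟨q', s'⟩ h
        simp only [g, Subtype.mk.injEq] at h
        have hcomp : ∀ i, r i * q.1 i + (s i).1 = r i * q'.1 i + (s' i).1 :=
          fun i => congrFun h i
        have hq : ∀ i, q.1 i = q'.1 i := by
          intro i
          have h1 := hcomp i
          have := (s i).2
          have := (s' i).2
          have e1 : (r i * q.1 i + (s i).1) / r i = q.1 i := by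
            rw [Nat.mul_add_div (hr i), Nat.div_eq_of_lt (s i).2]; omega
          have e2 : (r i * q'.1 i + (s' i).1) / r i = q'.1 i := by
            rw [Nat.mul_add_div (hr i), Nat.div_eq_of_lt (s' i).2]; omega
          rw [← e1, ← e2, h1]
        have hs : ∀ i, (s i).1 = (s' i).1 := by
          intro i
          have h1 := hcomp i
          rw [hq i] at h1
          omega
        refine Prod.ext ?_ ?_
        · exact Subtype.ext (funext hq)
        · funext i; exact Fin.ext (hs i)
      have hle := Nat.card_le_card_of_injective g hg
      have hcard : Nat.card ({q // q ∈ Qset n m} × ∀ i, Fin (r i))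
          = (δ + T).choose n * ∏ i, r i := by
        rw [Nat.card_prod]
        have h1 : Nat.card {q // q ∈ Qset n m} = (δ + T).choose n := by
          rw [Nat.card_eq_fintype_card, Fintype.card_coe, card_Qset, hmn]
        have h2 : Nat.card (∀ i, Fin (r i)) = ∏ i, r i := by
          rw [Nat.card_eq_fintype_card, Fintype.card_pi]
          simp
        rw [h1, h2]
      rw [hcard] at hle
      calc (∏ i, r i) * (δ + T).choose n = (δ + T).choose n * ∏ i, r i := mul_comm _ _
        _ ≤ Nat.card C := hle
  -- UPPER BOUND
  · have key : ∀ (α : C), (fun i => α.1 i / r i) ∈ Qset n δ := by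
      intro α
      rw [mem_Qset]
      have h1 : ((∑ i, α.1 i / r i : ℕ) : ℚ) ≤ (δ : ℚ) := by
        rw [Nat.cast_sum]
        calc ∑ i, ((α.1 i / r i : ℕ) : ℚ) ≤ ∑ i, (α.1 i : ℚ) / (r i : ℚ) :=
              Finset.sum_le_sum fun i _ => Nat.cast_div_le
          _ ≤ (δ : ℚ) := α.2
      exact_mod_cast h1
    let f : C → ({q // q ∈ Qset n δ} × ∀ i, Fin (r i)) :=
      fun α => (⟨fun i => α.1 i / r i, key α⟩, fun i => ⟨α.1 i % r i, Nat.mod_lt _ (hr i)⟩)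
    have hf : Function.Injective f := by
      rintro ⟨α, hα⟩ ⟨β, hβ⟩ h
      simp only [f, Prod.mk.injEq, Subtype.mk.injEq] at h
      obtain ⟨h1, h2⟩ := h
      apply Subtype.ext
      funext i
      have e1 : α i / r i = β i / r i := congrFun h1 i
      have e2 : α i % r i = β i % r i := by
        have := congrFun h2 i
        simpa using congrArg Fin.val this
      have d1 := Nat.div_add_mod (α i) (r i)
      have d2 := Nat.div_add_mod (β i) (r i)
      calc α i = r i * (α i / r i) + α i % r i := d1.symm
        _ = r i * (β i / r i) + β i % r i := by rw [e1, e2]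
        _ = β i := d2
    have hle := Nat.card_le_card_of_injective f hf
    have hcard : Nat.card ({q // q ∈ Qset n δ} × ∀ i, Fin (r i))
        = (δ + n).choose n * ∏ i, r i := by
      rw [Nat.card_prod]
      have h1 : Nat.card {q // q ∈ Qset n δ} = (δ + n).choose n := by
        rw [Nat.card_eq_fintype_card, Fintype.card_coe, card_Qset]
      have h2 : Nat.card (∀ i, Fin (r i)) = ∏ i, r i := by
        rw [Nat.card_eq_fintype_card, Fintype.card_pi]
        simp
      rw [h1, h2]
    rw [hcard] at hle
    calc Nat.card C ≤ (δ + n).choose n * ∏ i, r i := hle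
      _ = (∏ i, r i) * (δ + n).choose n := mul_comm _ _
end

section
/- Let $r \geq 1$ be an integer and $c_1 > 1$ a real number. The Euclidean space $\mathbb{R}^r$ can be covered by at most $\lfloor (1 + \sqrt{8 c_1})^r \rfloor$ cones with vertex $0$ and angular opening $\arccos(1 - \frac{1}{c_1})$ each; that is, there exist unit vectors $u_1, \dots, u_N$ with $N \leq (1+\sqrt{8c_1})^r$ such that every nonzero $x \in \mathbb{R}^r$ satisfies $\frac{\langle x, u_i \rangle}{\|x\|} \geq \cos\big(\arccos(1 - 1/c_1)\big) = 1 - \frac{1}{c_1}$ for some $i$. -/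
/-!
A maximal `ε`-separated subset of the unit sphere is an `ε`-net of it, and the disjoint balls of
radius `ε / 2` around its points lie in the ball of radius `1 + ε / 2`, so comparing volumes it has
at most `(1 + 2 / ε) ^ r` points. For unit vectors `⟪y, c⟫ = 1 - ‖y - c‖ ^ 2 / 2`, so with
`ε = √(2 / c₁)` every unit vector makes an angle at most `arccos (1 - 1 / c₁)` with a point of the
net, and `2 / ε = √(2 c₁) ≤ √(8 c₁)`.
-/

open scoped RealInnerProductSpace

open Metric MeasureTheory Module
open scoped NNReal ENNReal

section Packing

variable {E : Type*} [NormedAddCommGroup E] [NormedSpace ℝ E] [FiniteDimensional ℝ E]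

theorem Finset.card_le_of_isSeparated_of_subset_closedBall {ε : ℝ≥0} (hε : 0 < ε) {s : Finset E}
    (hs : (s : Set E) ⊆ closedBall 0 1) (hsep : IsSeparated ε (s : Set E)) :
    (s.card : ℝ) ≤ (1 + 2 / ε) ^ finrank ℝ E := by
  borelize E
  set μ : Measure E := Measure.addHaar
  have hε2 : (0 : ℝ) < ε / 2 := by positivity
  have hdisj : (s : Set E).PairwiseDisjoint fun c => ball c (ε / 2) := by
    intro c hc c' hc' hcc'
    refine ball_disjoint_ball ?_
    have h : (ε : ℝ≥0∞) < edist c c' := hsep hc hc' hcc'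
    rw [edist_dist, ← ENNReal.ofReal_coe_nnreal, ENNReal.ofReal_lt_ofReal_iff'] at h
    linarith [h.1]
  have hsub : (⋃ c ∈ s, ball c (ε / 2 : ℝ)) ⊆ ball (0 : E) (1 + ε / 2) :=
    Set.iUnion₂_subset fun c hc => ball_subset_ball' (by
      have := mem_closedBall_zero_iff.1 (hs hc); rw [dist_zero_right]; linarith)
  have hvol : (s.card : ℝ≥0∞) * ENNReal.ofReal ((ε / 2) ^ finrank ℝ E) * μ (ball 0 1) ≤
      ENNReal.ofReal ((1 + ε / 2) ^ finrank ℝ E) * μ (ball 0 1) :=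
    calc (s.card : ℝ≥0∞) * ENNReal.ofReal ((ε / 2) ^ finrank ℝ E) * μ (ball 0 1)
        = μ (⋃ c ∈ s, ball c (ε / 2 : ℝ)) := by
          rw [measure_biUnion_finset hdisj fun c _ => measurableSet_ball]
          simp only [μ.addHaar_ball_of_pos _ hε2, Finset.sum_const, nsmul_eq_mul, mul_assoc]
      _ ≤ μ (ball (0 : E) (1 + ε / 2)) := measure_mono hsub
      _ = ENNReal.ofReal ((1 + ε / 2) ^ finrank ℝ E) * μ (ball 0 1) :=
          μ.addHaar_ball_of_pos _ (by positivity)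
  have hcard := ENNReal.toReal_le_of_le_ofReal (by positivity)
    ((ENNReal.mul_le_mul_iff_left (measure_ball_pos _ _ one_pos).ne' measure_ball_lt_top.ne).1 hvol)
  rw [ENNReal.toReal_mul, ENNReal.toReal_ofReal (by positivity), ENNReal.toReal_natCast,
    ← le_div_iff₀ (by positivity), ← div_pow] at hcard
  refine hcard.trans_eq (congrArg (· ^ finrank ℝ E) ?_)
  field_simp
  ring

theorem Metric.packingNumber_le_of_subset_closedBall {ε : ℝ≥0} (hε : 0 < ε) {A : Set E}
    (hA : A ⊆ closedBall 0 1) :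
    packingNumber ε A ≤ ⌊(1 + 2 / ε : ℝ) ^ finrank ℝ E⌋₊ := by
  refine iSup₂_le fun C hCA => iSup_le fun hC => ?_
  by_contra! hlt
  obtain ⟨t, htC, ht⟩ := Set.exists_subset_encard_eq (Order.add_one_le_of_lt hlt)
  have htfin : t.Finite := Set.finite_of_encard_eq_coe ht
  have hcard := Finset.card_le_of_isSeparated_of_subset_closedBall hε
    (by rw [htfin.coe_toFinset]; exact htC.trans (hCA.trans hA))
    (by rw [htfin.coe_toFinset]; exact hC.subset htC)
  rw [htfin.encard_eq_coe_toFinset_card] at ht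
  have : (htfin.toFinset.card : ℝ) = ⌊(1 + 2 / ε : ℝ) ^ finrank ℝ E⌋₊ + 1 := by
    exact_mod_cast ht
  linarith [Nat.lt_floor_add_one ((1 + 2 / ε : ℝ) ^ finrank ℝ E)]

theorem Metric.exists_finset_isCover_sphere_card_le {ε : ℝ≥0} (hε : 0 < ε) :
    ∃ C : Finset E, (C : Set E) ⊆ sphere 0 1 ∧ (C.card : ℝ) ≤ (1 + 2 / ε) ^ finrank ℝ E ∧
      IsCover ε (sphere 0 1) (C : Set E) := by
  have hpack := packingNumber_le_of_subset_closedBall hε (sphere_subset_closedBall (x := (0 : E)))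
  have hfinite : packingNumber ε (sphere (0 : E) 1) ≠ ⊤ := ne_top_of_le_ne_top (by simp) hpack
  have hencard := (encard_maximalSeparatedSet hfinite).trans_le hpack
  have hfin := Set.finite_of_encard_le_coe hencard
  refine ⟨hfin.toFinset, by simpa using maximalSeparatedSet_subset, ?_, by
    simpa using isCover_maximalSeparatedSet hfinite⟩
  rw [hfin.encard_eq_coe_toFinset_card, Nat.cast_le] at hencard
  exact (Nat.cast_le.2 hencard).trans (Nat.floor_le (by positivity))

end Packing

theorem real_inner_eq_one_sub_norm_sub_sq_div_two {F : Type*} [NormedAddCommGroup F]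
    [InnerProductSpace ℝ F] {x y : F} (hx : ‖x‖ = 1) (hy : ‖y‖ = 1) :
    ⟪x, y⟫ = 1 - ‖x - y‖ ^ 2 / 2 := by
  rw [norm_sub_sq_real, hx, hy]
  ring

theorem Metric.IsCover.exists_one_sub_sq_div_two_le_inner_div_norm {F : Type*}
    [NormedAddCommGroup F] [InnerProductSpace ℝ F] {ε : ℝ≥0} {C : Set F} (hC : IsCover ε (sphere 0 1) C)
    (hC_sphere : C ⊆ sphere 0 1) {x : F} (hx : x ≠ 0) :
    ∃ c ∈ C, 1 - (ε : ℝ) ^ 2 / 2 ≤ ⟪x, c⟫ / ‖x‖ := by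
  have hy : ‖‖x‖⁻¹ • x‖ = 1 := norm_smul_inv_norm hx
  obtain ⟨c, hc, hdist⟩ := hC (mem_sphere_zero_iff_norm.2 hy)
  have hdist' : ‖‖x‖⁻¹ • x - c‖ ≤ ε := by
    rw [← dist_eq_norm, ← coe_nndist, NNReal.coe_le_coe, ← edist_le_coe]
    exact hdist
  refine ⟨c, hc, ?_⟩
  rw [div_eq_inv_mul _ ‖x‖, ← real_inner_smul_left,
    real_inner_eq_one_sub_norm_sub_sq_div_two hy (mem_sphere_zero_iff_norm.1 (hC_sphere hc))]
  linarith [pow_le_pow_left₀ (norm_nonneg _) hdist' 2]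

theorem stmt_5_general (r : ℕ) (c₁ : ℝ) (hc : 1 < c₁) :
    ∃ (N : ℕ) (u : Fin N → EuclideanSpace ℝ (Fin r)),
      (N : ℝ) ≤ (1 + Real.sqrt (8 * c₁)) ^ r ∧
      (∀ i, ‖u i‖ = 1) ∧
      ∀ x : EuclideanSpace ℝ (Fin r), x ≠ 0 →
        ∃ i, 1 - 1 / c₁ ≤ ⟪x, u i⟫ / ‖x‖ := by
  have hc₁ : 0 < c₁ := by linarith
  set ε : ℝ≥0 := ⟨√(2 / c₁), Real.sqrt_nonneg _⟩
  have hε : 0 < ε := show 0 < √(2 / c₁) by positivity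
  have hε_sq : (ε : ℝ) ^ 2 / 2 = 1 / c₁ := by
    rw [show (ε : ℝ) = √(2 / c₁) from rfl, Real.sq_sqrt (by positivity)]
    ring
  have hε_bound : 2 / (ε : ℝ) ≤ √(8 * c₁) := by
    rw [div_le_iff₀ (show (0 : ℝ) < ε from hε), show (ε : ℝ) = √(2 / c₁) from rfl,
      ← Real.sqrt_mul (by positivity), Real.le_sqrt (by norm_num) (by positivity)]
    field_simp
    norm_num
  obtain ⟨C, hC_sphere, hC_card, hC_cover⟩ :=
    exists_finset_isCover_sphere_card_le (E := EuclideanSpace ℝ (Fin r)) hε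
  refine ⟨C.card, fun i => C.equivFin.symm i, ?_,
    fun i => mem_sphere_zero_iff_norm.1 (hC_sphere (C.equivFin.symm i).2), fun x hx => ?_⟩
  · rw [finrank_euclideanSpace_fin] at hC_card
    exact hC_card.trans (pow_le_pow_left₀ (by positivity) (by linarith) r)
  · obtain ⟨c, hc, hxc⟩ := hC_cover.exists_one_sub_sq_div_two_le_inner_div_norm hC_sphere hx
    exact ⟨C.equivFin ⟨c, hc⟩, by simpa [hε_sq] using hxc⟩

theorem stmt_5 (r : ℕ) (hr : 1 ≤ r) (c₁ : ℝ) (hc : 1 < c₁) :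
    ∃ (N : ℕ) (u : Fin N → EuclideanSpace ℝ (Fin r)),
      (N : ℝ) ≤ (1 + Real.sqrt (8 * c₁)) ^ r ∧
      (∀ i, ‖u i‖ = 1) ∧
      ∀ x : EuclideanSpace ℝ (Fin r), x ≠ 0 →
        ∃ i, 1 - 1 / c₁ ≤ ⟪x, u i⟫ / ‖x‖ :=
  stmt_5_general r c₁ hc
end

section
/- Let $V$ be a real inner product space with norm $|\cdot|$, let $\alpha > 0$, and let $x, y \in V$ be nonzero vectors satisfying $\frac{\langle x, y \rangle}{|x| \cdot |y|} \geq 1 - \frac{\alpha}{4}$ and $\frac{|y|}{|x|} \geq \frac{1}{\sqrt{\alpha}} + 1$. Set $a := \lfloor |y|/|x| \rfloor$. Then $|a x - y|^2 \leq \alpha \left( a^2 |x|^2 + |y|^2 \right)$. -/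
open scoped RealInnerProductSpace

theorem stmt_7 {V : Type*} [NormedAddCommGroup V] [InnerProductSpace ℝ V]
    (α : ℝ) (hα : 0 < α) (x y : V) (hx : x ≠ 0) (hy : y ≠ 0)
    (hcos : 1 - α / 4 ≤ ⟪x, y⟫ / (‖x‖ * ‖y‖))
    (hratio : 1 / Real.sqrt α + 1 ≤ ‖y‖ / ‖x‖)
    (a : ℤ) (ha : a = ⌊‖y‖ / ‖x‖⌋) :
    ‖(a : ℝ) • x - y‖ ^ 2 ≤ α * ((a : ℝ) ^ 2 * ‖x‖ ^ 2 + ‖y‖ ^ 2) := by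
  have hu : 0 < ‖x‖ := norm_pos_iff.mpr hx
  have hv : 0 < ‖y‖ := norm_pos_iff.mpr hy
  have hsα : 0 < Real.sqrt α := Real.sqrt_pos.mpr hα
  have hsq : Real.sqrt α ^ 2 = α := Real.sq_sqrt hα.le
  have hfl : (a : ℝ) ≤ ‖y‖ / ‖x‖ := by rw [ha]; exact Int.floor_le _
  have hfl2 : ‖y‖ / ‖x‖ < (a : ℝ) + 1 := by rw [ha]; exact Int.lt_floor_add_one _
  have hgt : 1 / Real.sqrt α < (a : ℝ) := by
    have h := Int.sub_one_lt_floor (‖y‖ / ‖x‖)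
    rw [← ha] at h
    linarith
  have ha0 : (0 : ℝ) < (a : ℝ) := lt_trans (by positivity) hgt
  have hauv : (a : ℝ) * ‖x‖ ≤ ‖y‖ := (le_div_iff₀ hu).mp hfl
  have hvlt : ‖y‖ < ((a : ℝ) + 1) * ‖x‖ := (div_lt_iff₀ hu).mp hfl2
  have hip : (1 - α / 4) * (‖x‖ * ‖y‖) ≤ ⟪x, y⟫ :=
    (le_div_iff₀ (by positivity)).mp hcos
  have hαa : 1 ≤ α * (a : ℝ) ^ 2 := by
    have h1 : 1 < (a : ℝ) * Real.sqrt α := (div_lt_iff₀ hsα).mp hgt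
    calc (1:ℝ) ≤ ((a : ℝ) * Real.sqrt α) ^ 2 := by nlinarith
    _ = α * (a : ℝ) ^ 2 := by rw [mul_pow, hsq]; ring
  have hru : (1 / Real.sqrt α + 1) * ‖x‖ ≤ ‖y‖ := (le_div_iff₀ hu).mp hratio
  have hαv : ‖x‖ ^ 2 ≤ α * ‖y‖ ^ 2 := by
    have h2 : ‖x‖ / Real.sqrt α ≤ ‖y‖ := by
      have : ‖x‖ / Real.sqrt α ≤ (1 / Real.sqrt α + 1) * ‖x‖ := by
        rw [div_eq_mul_one_div, mul_comm]
        nlinarith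
      linarith
    have h3 : ‖x‖ ≤ Real.sqrt α * ‖y‖ := by
      rw [div_le_iff₀ hsα] at h2; linarith [mul_comm ‖y‖ (Real.sqrt α)]
    calc ‖x‖ ^ 2 ≤ (Real.sqrt α * ‖y‖) ^ 2 := by nlinarith
    _ = α * ‖y‖ ^ 2 := by rw [mul_pow, hsq]
  have hexp : ‖(a : ℝ) • x - y‖ ^ 2
      = (a : ℝ) ^ 2 * ‖x‖ ^ 2 - 2 * (a : ℝ) * ⟪x, y⟫ + ‖y‖ ^ 2 := by
    rw [norm_sub_sq_real, real_inner_smul_left, norm_smul, mul_pow,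
      Real.norm_eq_abs, sq_abs]
    ring
  rw [hexp]
  have hsqu : ((a : ℝ) * ‖x‖ - ‖y‖) ^ 2 ≤ ‖x‖ ^ 2 := by
    nlinarith
  nlinarith [sq_nonneg ((a : ℝ) * ‖x‖ - ‖y‖), mul_pos hu hv,
    mul_le_mul_of_nonneg_right hαa (sq_nonneg ‖x‖),
    mul_le_mul_of_nonneg_left hip (le_of_lt ha0)]
end

section
/- Let $K$ be a field of characteristic $0$, $g_2, g_3 \in K$, and let $T : K[X,Y] \to K[X,Y]$ be the reduction map modulo the relation $X^3 = \frac{1}{4}(Y^2 + g_2 X + g_3)$, producing the unique polynomial of degree $\leq 2$ in $X$ equivalent to the input modulo $Y^2 - 4X^3 + g_2 X + g_3$. Then for every $n \geq 0$, $T(X^n)$ has total degree at most $n - \lfloor n/3 \rfloor$, degree in $Y$ at most $2\lfloor n/3 \rfloor$, and its canonical expansion contains the monomial $(1/4)^{\lfloor n/3 \rfloor} X^{n - 3\lfloor n/3 \rfloor} Y^{2\lfloor n/3 \rfloor}$ with nonzero coefficient. -/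
/-!
Write `X = X 0`, `Y = X 1`. The reduction of `X ^ n` is computed by the recursion
`X ^ (n + 3) ↦ ¼ ((Y ² + g₃) X ^ n + g₂ X ^ (n + 1))`, which keeps the `X`-degree at most `2`
and stays in the class of `X ^ n` modulo `Y ² - 4 X ³ + g₂ X + g₃`. Since that relation has
`X`-degree `3`, a multiple of it of `X`-degree at most `2` vanishes, so any `P` as in the theorem
equals this reduction. Along the recursion the total degree grows by at most `2` and the
`Y`-degree by at most `2` every three steps, and these bounds leave the term `¼ Y ² X ^ n` as the
only source of the monomial `X ^ (n % 3) Y ^ (2 ⌊n / 3⌋)`.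
-/
open MvPolynomial

namespace MvPolynomial

variable {R σ : Type*} [CommSemiring R] [NoZeroDivisors R] {p q : MvPolynomial σ R}

theorem degreeOf_le_of_dvd (i : σ) (h : p ∣ q) (hq : q ≠ 0) : degreeOf i p ≤ degreeOf i q := by
  obtain ⟨r, rfl⟩ := h
  rw [degreeOf_mul_eq (left_ne_zero_of_mul hq) (right_ne_zero_of_mul hq)]
  exact Nat.le_add_right _ _

end MvPolynomial

section Weierstrass

variable {K : Type*} [Field K] (g₂ g₃ : K)

noncomputable def weierstrassRel : MvPolynomial (Fin 2) K :=
  X 1 ^ 2 - 4 * X 0 ^ 3 + C g₂ * X 0 + C g₃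

noncomputable def reducedXPow : ℕ → MvPolynomial (Fin 2) K
  | 0 => 1
  | 1 => X 0
  | 2 => X 0 ^ 2
  | n + 3 => C (1 / 4) * ((X 1 ^ 2 + C g₃) * reducedXPow n + C g₂ * reducedXPow (n + 1))

variable {g₂ g₃}

theorem coeff_single_zero_three_weierstrassRel :
    coeff (Finsupp.single 0 3) (weierstrassRel g₂ g₃) = -4 := by
  rw [weierstrassRel, ← map_ofNat C 4]
  simp [coeff_X_pow, coeff_X, coeff_C, Finsupp.single_eq_single_iff,
    eq_comm (a := (0 : Fin 2 →₀ ℕ))]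

theorem three_le_degreeOf_weierstrassRel (h4 : (4 : K) ≠ 0) :
    3 ≤ degreeOf 0 (weierstrassRel g₂ g₃) := by
  have hmem : Finsupp.single 0 3 ∈ (weierstrassRel g₂ g₃).support := by
    rw [mem_support_iff, coeff_single_zero_three_weierstrassRel]
    exact neg_ne_zero.mpr h4
  simpa using le_degreeOf_of_mem_support 0 hmem

theorem eq_of_weierstrassRel_dvd_sub (h4 : (4 : K) ≠ 0) {P Q : MvPolynomial (Fin 2) K}
    (hP : degreeOf 0 P ≤ 2) (hQ : degreeOf 0 Q ≤ 2) (h : weierstrassRel g₂ g₃ ∣ P - Q) :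
    P = Q := by
  by_contra hne
  have hle : degreeOf 0 (weierstrassRel g₂ g₃) ≤ degreeOf 0 (P - Q) :=
    degreeOf_le_of_dvd 0 h (sub_ne_zero.mpr hne)
  have hsub : degreeOf 0 (P - Q) ≤ 2 := (degreeOf_sub_le 0 P Q).trans (max_le hP hQ)
  have h3 := three_le_degreeOf_weierstrassRel (g₂ := g₂) (g₃ := g₃) h4
  omega

theorem weierstrassRel_dvd_X_pow_sub_reducedXPow (h4 : (4 : K) ≠ 0) (n : ℕ) :
    weierstrassRel g₂ g₃ ∣ X 0 ^ n - reducedXPow g₂ g₃ n := by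
  induction n using reducedXPow.induct with
  | case1 | case2 | case3 => simp [reducedXPow]
  | case4 n ih₀ ih₁ =>
    show weierstrassRel g₂ g₃ ∣ X 0 ^ (n + 3) - reducedXPow g₂ g₃ (n + 3)
    obtain ⟨q₀, hq₀⟩ := ih₀
    obtain ⟨q₁, hq₁⟩ := ih₁
    have hC : (C (1 / 4 : K) : MvPolynomial (Fin 2) K) * 4 = 1 := by
      rw [← map_ofNat C 4, ← C_mul, one_div_mul_cancel h4, C_1]
    refine ⟨C (1 / 4) * ((X 1 ^ 2 + C g₃) * q₀ + C g₂ * q₁ - X 0 ^ n), ?_⟩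
    rw [reducedXPow, weierstrassRel] at *
    linear_combination (C (1 / 4) * (X 1 ^ 2 + C g₃)) * hq₀ + (C (1 / 4) * C g₂) * hq₁ -
      X 0 ^ (n + 3) * hC

theorem degreeOf_reducedXPow_add_three_le (i : Fin 2) (n : ℕ) :
    degreeOf i (reducedXPow g₂ g₃ (n + 3)) ≤
      max (degreeOf i (X 1 ^ 2 : MvPolynomial (Fin 2) K) + degreeOf i (reducedXPow g₂ g₃ n))
        (degreeOf i (reducedXPow g₂ g₃ (n + 1))) := by
  rw [reducedXPow]
  refine (degreeOf_C_mul_le _ _ _).trans ((degreeOf_add_le _ _ _).trans (max_le_max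
    ((degreeOf_mul_le _ _ _).trans ?_) ((degreeOf_mul_le _ _ _).trans ?_)))
  · grw [degreeOf_add_le, degreeOf_C, max_zero]
  · rw [degreeOf_C, zero_add]

theorem totalDegree_reducedXPow_add_three_le (n : ℕ) :
    totalDegree (reducedXPow g₂ g₃ (n + 3)) ≤
      max (2 + totalDegree (reducedXPow g₂ g₃ n)) (totalDegree (reducedXPow g₂ g₃ (n + 1))) := by
  rw [reducedXPow]
  refine (totalDegree_mul _ _).trans ?_
  rw [totalDegree_C, zero_add]
  refine (totalDegree_add _ _).trans (max_le_max ((totalDegree_mul _ _).trans ?_)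
    ((totalDegree_mul _ _).trans ?_))
  · grw [totalDegree_add, totalDegree_C, totalDegree_X_pow, max_zero]
  · rw [totalDegree_C, zero_add]

theorem degreeOf_zero_reducedXPow_le (n : ℕ) : degreeOf 0 (reducedXPow g₂ g₃ n) ≤ 2 := by
  induction n using reducedXPow.induct with
  | case1 | case2 | case3 => simp [reducedXPow]
  | case4 n ih₀ ih₁ =>
    refine (degreeOf_reducedXPow_add_three_le 0 n).trans (max_le ?_ ih₁)
    rwa [degreeOf_X_pow_of_ne _ (by decide), zero_add]

theorem degreeOf_one_reducedXPow_le (n : ℕ) : degreeOf 1 (reducedXPow g₂ g₃ n) ≤ 2 * (n / 3) := by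
  induction n using reducedXPow.induct with
  | case1 | case2 | case3 => simp [reducedXPow, degreeOf_X_of_ne, degreeOf_X_pow_of_ne]
  | case4 n ih₀ ih₁ =>
    refine (degreeOf_reducedXPow_add_three_le 1 n).trans (max_le ?_ ?_)
    · rw [degreeOf_X_self_pow]
      omega
    · omega

theorem totalDegree_reducedXPow_le (n : ℕ) : totalDegree (reducedXPow g₂ g₃ n) ≤ n - n / 3 := by
  induction n using reducedXPow.induct with
  | case1 | case2 | case3 => simp [reducedXPow]
  | case4 n ih₀ ih₁ =>
    refine (totalDegree_reducedXPow_add_three_le n).trans (max_le ?_ ?_) <;> omega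

theorem coeff_reducedXPow_eq_zero {n : ℕ} {d : Fin 2 →₀ ℕ}
    (hd : 2 * (n / 3) < d 1 ∨ n - n / 3 < d 0 + d 1) : coeff d (reducedXPow g₂ g₃ n) = 0 := by
  rcases hd with hd | hd
  · exact notMem_support_iff.mp
      (notMem_support_of_degreeOf_lt 1 ((degreeOf_one_reducedXPow_le n).trans_lt hd))
  · refine coeff_eq_zero_of_totalDegree_lt ?_
    rw [← Finsupp.degree_apply, Finsupp.degree_eq_sum, Fin.sum_univ_two]
    exact (totalDegree_reducedXPow_le n).trans_lt hd

theorem coeff_reducedXPow (n : ℕ) :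
    coeff (Finsupp.single 0 (n % 3) + Finsupp.single 1 (2 * (n / 3))) (reducedXPow g₂ g₃ n) =
      (1 / 4) ^ (n / 3) := by
  induction n using reducedXPow.induct with
  | case1 | case2 | case3 => simp [reducedXPow, coeff_X_pow]
  | case4 n ih₀ _ =>
    have hmon : Finsupp.single (0 : Fin 2) ((n + 3) % 3) + Finsupp.single 1 (2 * ((n + 3) / 3)) =
        Finsupp.single 1 2 + (Finsupp.single 0 (n % 3) + Finsupp.single 1 (2 * (n / 3))) := by
      refine Finsupp.ext fun i => ?_
      fin_cases i <;> simp [mul_add, add_comm]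
    rw [show n.succ.succ.succ = n + 3 from rfl, hmon, reducedXPow, coeff_C_mul, add_mul,
      coeff_add, coeff_add, coeff_C_mul, coeff_C_mul, X_pow_eq_monomial, coeff_monomial_mul, ih₀,
      coeff_reducedXPow_eq_zero, coeff_reducedXPow_eq_zero]
    -- the `g₂`-term dies by the total-degree or the `Y`-degree bound, the `g₃`-term by the latter
    · rw [Nat.add_div_right n three_pos, pow_succ]
      ring
    · simp only [Finsupp.coe_add, Pi.add_apply, Finsupp.single_eq_same,
        Finsupp.single_eq_of_ne one_ne_zero, Finsupp.single_eq_of_ne zero_ne_one]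
      omega
    · simp

end Weierstrass

theorem stmt_15 (K : Type*) [Field K] [CharZero K] (g₂ g₃ : K) (n : ℕ)
    (P : MvPolynomial (Fin 2) K)
    (hdeg : MvPolynomial.degreeOf 0 P ≤ 2)
    (hmem : (MvPolynomial.X 0 : MvPolynomial (Fin 2) K) ^ n - P ∈
      Ideal.span {(MvPolynomial.X 1 : MvPolynomial (Fin 2) K) ^ 2 -
        4 * MvPolynomial.X 0 ^ 3 + MvPolynomial.C g₂ * MvPolynomial.X 0 +
        MvPolynomial.C g₃}) :
    P.totalDegree ≤ n - n / 3 ∧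
    MvPolynomial.degreeOf 1 P ≤ 2 * (n / 3) ∧
    MvPolynomial.coeff
      (Finsupp.single (0 : Fin 2) (n - 3 * (n / 3)) +
        Finsupp.single (1 : Fin 2) (2 * (n / 3))) P = (1 / 4 : K) ^ (n / 3) := by
  have h4 : (4 : K) ≠ 0 := by norm_num
  have hdvd : weierstrassRel g₂ g₃ ∣ P - reducedXPow g₂ g₃ n := by
    rw [← sub_sub_sub_cancel_left _ _ (X 0 ^ n)]
    exact dvd_sub (weierstrassRel_dvd_X_pow_sub_reducedXPow h4 n)
      (Ideal.mem_span_singleton.mp hmem)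
  obtain rfl := eq_of_weierstrassRel_dvd_sub h4 hdeg (degreeOf_zero_reducedXPow_le n) hdvd
  refine ⟨totalDegree_reducedXPow_le n, degreeOf_one_reducedXPow_le n, ?_⟩
  rw [← Nat.mod_def]
  exact coeff_reducedXPow n
end

section
/- Let $a > 15788$ be a real number and define $f : [2, \infty) \to \mathbb{R}$ by $f(x) = (2904 x)^x \, a^{x/(x-1)}$. Then $f$ attains its minimum at a unique point $\xi \in (2, \infty)$, and $\xi$ satisfies $\sqrt{\frac{2 \log a}{\log(\log a / \log\log a) + 21}} + 1 < \xi < \sqrt{\frac{2 \log a}{\log(\log a / \log\log a) + 16}} + 1$. -/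
/-!
Put `g = log f`, so `g x = x log (2904 x) + x/(x-1) log a` and `g' x = (φ x - log a) / (x - 1)²`
with `φ x = (log (2904 x) + 1) (x - 1)²`. Since `φ` is strictly increasing on `[2, ∞)` and
`φ 2 = log (5808 e) < log a`, `g` decreases and then increases around the unique root `ξ > 2` of
`φ ξ = log a`, which is therefore the unique minimiser.

With `s = log (2904 ξ) + 1` we have `(ξ - 1)² = log a / s`, so the two bounds on `ξ` say
`D + 16 < 2 s < D + 21` for `D = log (log a / log log a)`. As `log log a = log s + 2 log (ξ - 1)`
and `log (ξ - 1) < log ξ ≤ log 2 + log (ξ - 1)`, both reduce to numerical estimates on `e`.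
-/

open Real Set

lemma lt_of_deriv_neg_of_deriv_pos {g : ℝ → ℝ} {a ξ x : ℝ} (hg : ContinuousOn g (Ici a))
    (hneg : ∀ y ∈ Ioo a ξ, deriv g y < 0) (hpos : ∀ y ∈ Ioi ξ, 0 < deriv g y)
    (hξ : a ≤ ξ) (hx : a ≤ x) (hne : x ≠ ξ) : g ξ < g x := by
  rcases hne.lt_or_gt with hlt | hgt
  · refine strictAntiOn_of_deriv_neg (convex_Icc a ξ) (hg.mono Icc_subset_Ici_self) ?_
      ⟨hx, hlt.le⟩ ⟨hξ, le_rfl⟩ hlt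
    rwa [interior_Icc]
  · refine strictMonoOn_of_deriv_pos (convex_Ici ξ) (hg.mono (Ici_subset_Ici.2 hξ)) ?_
      (mem_Ici.2 le_rfl) (le_of_lt hgt) hgt
    rwa [interior_Ici]

noncomputable def logObjective (c L x : ℝ) : ℝ := x * log (c * x) + x / (x - 1) * L

noncomputable def criticalFn (c x : ℝ) : ℝ := (log (c * x) + 1) * (x - 1) ^ 2

section
variable {c L x : ℝ}

lemma rpow_mul_rpow_eq_exp_logObjective {a : ℝ} (hc : 0 < c) (ha : 0 < a) (hx : 0 < x) :
    (c * x) ^ x * a ^ (x / (x - 1)) = exp (logObjective c (log a) x) := by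
  rw [rpow_def_of_pos (by positivity), rpow_def_of_pos ha, ← exp_add, logObjective]
  ring_nf

lemma hasDerivAt_logObjective (hc : 0 < c) (hx : 1 < x) :
    HasDerivAt (logObjective c L) ((criticalFn c x - L) / (x - 1) ^ 2) x := by
  have hx1 : x - 1 ≠ 0 := sub_ne_zero.2 hx.ne'
  have hlog : HasDerivAt (fun y ↦ log (c * y)) (c / (c * x)) x :=
    ((hasDerivAt_id x).const_mul c).log (by positivity) |>.congr_deriv (by simp)
  have h : HasDerivAt (logObjective c L)
      (1 * log (c * x) + x * (c / (c * x)) + (1 * (x - 1) - x * 1) / (x - 1) ^ 2 * L) x :=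
    ((hasDerivAt_id' x).mul hlog).add
      (((hasDerivAt_id' x).div ((hasDerivAt_id' x).sub_const 1) hx1).mul_const L)
  convert h using 1
  rw [criticalFn]
  field_simp
  ring

lemma strictMonoOn_criticalFn (hc : 1 ≤ 2 * c) : StrictMonoOn (criticalFn c) (Ici 2) := by
  intro x (hx : 2 ≤ x) y _ hxy
  have hlog : 0 ≤ log (c * x) := log_nonneg (by nlinarith)
  have := log_lt_log (by nlinarith) (mul_lt_mul_of_pos_left hxy (by linarith) : c * x < c * y)
  unfold criticalFn
  gcongr ?_ * ?_
  · linarith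
  · gcongr
    linarith

lemma one_le_criticalFn_two (hc : 1 ≤ 2 * c) : 1 ≤ criticalFn c 2 := by
  norm_num [criticalFn]
  exact log_nonneg (by linarith)

lemma exists_criticalFn_eq (hc : 1 ≤ 2 * c) (hL : criticalFn c 2 < L) :
    ∃ ξ, 2 < ξ ∧ criticalFn c ξ = L := by
  have h2 := one_le_criticalFn_two hc
  have hM : L ≤ criticalFn c (L + 2) := by
    have : 0 ≤ log (c * (L + 2)) := log_nonneg (by nlinarith)
    unfold criticalFn
    nlinarith
  have hcont : ContinuousOn (criticalFn c) (Icc 2 (L + 2)) := by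
    refine ContinuousOn.mul ((ContinuousOn.log (by fun_prop) ?_).add continuousOn_const)
      (by fun_prop)
    intro y hy
    exact (by nlinarith [hy.1] : 0 < c * y).ne'
  obtain ⟨ξ, hξ, hξL⟩ := intermediate_value_Icc (by linarith) hcont ⟨hL.le, hM⟩
  refine ⟨ξ, hξ.1.lt_of_ne ?_, hξL⟩
  rintro rfl
  exact hL.ne hξL

lemma logObjective_lt_of_ne {ξ : ℝ} (hc : 1 ≤ 2 * c) (hξ : 2 ≤ ξ)
    (hcrit : criticalFn c ξ = L) (hx : 2 ≤ x) (hne : x ≠ ξ) :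
    logObjective c L ξ < logObjective c L x := by
  have hc0 : 0 < c := by linarith
  have hderiv (y : ℝ) (hy : 2 ≤ y) :
      deriv (logObjective c L) y = (criticalFn c y - L) / (y - 1) ^ 2 :=
    (hasDerivAt_logObjective hc0 (by linarith)).deriv
  refine lt_of_deriv_neg_of_deriv_pos (fun y (hy : 2 ≤ y) ↦ ?_) (fun y hy ↦ ?_)
    (fun y (hy : ξ < y) ↦ ?_) hξ hx hne
  · exact (hasDerivAt_logObjective hc0 (by linarith)).continuousAt.continuousWithinAt
  · rw [hderiv y hy.1.le]
    refine div_neg_of_neg_of_pos ?_ (by nlinarith [hy.1])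
    rw [sub_neg, ← hcrit]
    exact strictMonoOn_criticalFn hc hy.1.le hξ hy.2
  · rw [hderiv y (by linarith)]
    refine div_pos ?_ (by nlinarith)
    rw [sub_pos, ← hcrit]
    exact strictMonoOn_criticalFn hc hξ (hξ.trans hy.le) hy

end

lemma exp_natCast_lt_pow (n : ℕ) (hn : n ≠ 0) : exp n < 2.7182818286 ^ n := by
  rw [← exp_one_pow]
  exact pow_lt_pow_left₀ exp_one_lt_d9 (exp_pos 1).le hn

lemma pow_lt_exp_natCast (n : ℕ) (hn : n ≠ 0) : 2.7182818283 ^ n < exp n := by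
  rw [← exp_one_pow]
  exact pow_lt_pow_left₀ exp_one_gt_d9 (by norm_num) hn

lemma log_mul_add_one_mem_Ioc {c x : ℝ} (hc : 0 < c) (hx : 2 ≤ x) :
    log (c * x) + 1 ∈ Ioc (log c + log (x - 1) + 1) (log (2 * c) + log (x - 1) + 1) := by
  rw [log_mul hc.ne' (by linarith), mul_comm 2 c, log_mul hc.ne' two_ne_zero]
  refine ⟨?_, ?_⟩
  · linarith [log_lt_log (by linarith) (by linarith : x - 1 < x)]
  · have := log_le_log (by linarith) (by linarith : x ≤ 2 * (x - 1))
    rw [log_mul two_ne_zero (by linarith)] at this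
    linarith

lemma log_criticalFn {c x : ℝ} (hs : log (c * x) + 1 ≠ 0) (hx : 1 < x) :
    log (criticalFn c x) = log (log (c * x) + 1) + 2 * log (x - 1) := by
  rw [criticalFn, log_mul hs (by positivity), log_pow, Nat.cast_ofNat]

lemma log_div_log_pos {x : ℝ} (hx : 1 < x) : 0 < log (x / log x) := by
  have hlog : 0 < log x := log_pos hx
  refine log_pos ((one_lt_div hlog).2 ?_)
  linarith [log_le_sub_one_of_pos (by linarith : 0 < x)]

lemma lt_sqrt_two_mul_div_iff {s t d L : ℝ} (ht : 0 < t) (hd : 0 < d) (hL : s * t ^ 2 = L) :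
    t < √(2 * L / d) ↔ d < 2 * s := by
  rw [lt_sqrt ht.le, lt_div_iff₀ hd, ← hL]
  constructor <;> intro h <;> nlinarith [pow_pos ht 2]

lemma sqrt_two_mul_div_lt_iff {s t d L : ℝ} (ht : 0 < t) (hd : 0 < d) (hL : s * t ^ 2 = L) :
    √(2 * L / d) < t ↔ 2 * s < d := by
  rw [sqrt_lt' ht, div_lt_iff₀ hd, ← hL]
  constructor <;> intro h <;> nlinarith [pow_pos ht 2]

lemma log_div_log_criticalFn_add_sixteen_lt {ξ : ℝ} (hξ : 2 < ξ) :
    log (criticalFn 2904 ξ / log (criticalFn 2904 ξ)) + 16 < 2 * (log (2904 * ξ) + 1) := by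
  obtain ⟨hs_lo, hs_hi⟩ := log_mul_add_one_mem_Ioc (by norm_num : (0 : ℝ) < 2904) hξ.le
  norm_num only at hs_hi
  set s := log (2904 * ξ) + 1
  set v := log (ξ - 1)
  have hv : 0 < v := log_pos (by linarith)
  have hs8 : 8 < s := by
    have : 7 < log 2904 := by
      rw [lt_log_iff_exp_lt (by norm_num)]
      have := exp_natCast_lt_pow 7 (by norm_num)
      norm_num at this
      linarith
    linarith
  have hlogs : 2 < log s := by
    rw [lt_log_iff_exp_lt (by linarith)]
    have := exp_natCast_lt_pow 2 (by norm_num)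
    norm_num at this
    linarith
  -- linear in `v`, given `s ≤ log 5808 + 1 + v` and `log s > 2`
  have hkey : exp 14 * s ≤ 2904 ^ 2 * (log s + 2 * v) := by
    have h9 : log 5808 < 9 := by
      rw [log_lt_iff_lt_exp (by norm_num)]
      have := pow_lt_exp_natCast 9 (by norm_num)
      norm_num at this
      linarith
    have h14 : exp 14 < 1300000 := by
      have := exp_natCast_lt_pow 14 (by norm_num)
      norm_num at this
      linarith
    nlinarith
  have hlogL_pos : 0 < log s + 2 * v := by linarith
  have := log_le_log (by positivity) hkey
  rw [log_mul (by positivity) (by linarith), log_exp, log_mul (by norm_num) hlogL_pos.ne',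
    log_pow, Nat.cast_ofNat] at this
  have hL_pos : 0 < criticalFn 2904 ξ := mul_pos (by linarith) (by nlinarith)
  have hlogL : log (criticalFn 2904 ξ) = log s + 2 * v :=
    log_criticalFn (by linarith) (by linarith)
  rw [log_div hL_pos.ne' (hlogL ▸ hlogL_pos.ne'), hlogL]
  linarith

lemma two_mul_lt_log_div_log_criticalFn_add_twentyone {ξ : ℝ} (hξ : 2 < ξ) :
    2 * (log (2904 * ξ) + 1) < log (criticalFn 2904 ξ / log (criticalFn 2904 ξ)) + 21 := by
  obtain ⟨hs_lo, hs_hi⟩ := log_mul_add_one_mem_Ioc (by norm_num : (0 : ℝ) < 2904) hξ.le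
  norm_num only at hs_hi
  set s := log (2904 * ξ) + 1
  set v := log (ξ - 1)
  have hv : 0 < v := log_pos (by linarith)
  have hs : 1 < s := by linarith [log_pos (by norm_num : (1 : ℝ) < 2904)]
  have hlogs : 0 < log s := log_pos hs
  have hlogL : log (criticalFn 2904 ξ) = log s + 2 * v :=
    log_criticalFn (by linarith) (by linarith)
  have hL_pos : 0 < criticalFn 2904 ξ := mul_pos (by linarith) (by nlinarith)
  have hloglogL : log (log s + 2 * v) < log 3 + log s := by
    have : log s + 2 * v < 3 * s := by
      linarith [log_le_sub_one_of_pos (by linarith : 0 < s),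
        log_pos (by norm_num : (1 : ℝ) < 2904)]
    rw [← log_mul (by norm_num) (by linarith)]
    exact log_lt_log (by linarith) this
  have h19 : log 3 + 2 * log 5808 < 19 := by
    have h : log (3 * 5808 ^ 2) < 19 := by
      rw [log_lt_iff_lt_exp (by norm_num)]
      have := pow_lt_exp_natCast 19 (by norm_num)
      norm_num at this ⊢
      linarith
    rwa [log_mul (by norm_num) (by norm_num), log_pow, Nat.cast_ofNat] at h
  rw [log_div hL_pos.ne' (hlogL ▸ (by linarith : log s + 2 * v ≠ 0)), hlogL]
  linarith

theorem stmt_16 (a : ℝ) (ha : 15788 < a) :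
    ∃ ξ : ℝ, 2 < ξ ∧
      (∀ x : ℝ, 2 ≤ x →
        Real.rpow (2904 * ξ) ξ * Real.rpow a (ξ / (ξ - 1)) ≤
          Real.rpow (2904 * x) x * Real.rpow a (x / (x - 1))) ∧
      (∀ ξ' : ℝ, 2 ≤ ξ' →
        (∀ x : ℝ, 2 ≤ x →
          Real.rpow (2904 * ξ') ξ' * Real.rpow a (ξ' / (ξ' - 1)) ≤
            Real.rpow (2904 * x) x * Real.rpow a (x / (x - 1))) → ξ' = ξ) ∧
      Real.sqrt (2 * Real.log a /
          (Real.log (Real.log a / Real.log (Real.log a)) + 21)) + 1 < ξ ∧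
      ξ < Real.sqrt (2 * Real.log a /
          (Real.log (Real.log a / Real.log (Real.log a)) + 16)) + 1 := by
  -- `15788` is just above `5808 e`, which makes `criticalFn 2904 2 = log (5808 e) < log a`
  have hL : criticalFn 2904 2 < log a := by
    have := log_lt_log (by positivity) (by linarith [exp_one_lt_d9] : 5808 * exp 1 < a)
    rw [log_mul (by norm_num) (exp_pos 1).ne', log_exp] at this
    norm_num [criticalFn]
    linarith
  obtain ⟨ξ, hξ2, hξ⟩ := exists_criticalFn_eq (by norm_num) hL
  have hf (x : ℝ) (hx : 2 ≤ x) : Real.rpow (2904 * x) x * Real.rpow a (x / (x - 1)) =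
      exp (logObjective 2904 (log a) x) :=
    rpow_mul_rpow_eq_exp_logObjective (by norm_num) (by linarith) (by linarith)
  have hmin (x : ℝ) (hx : 2 ≤ x) (hne : x ≠ ξ) :=
    logObjective_lt_of_ne (by norm_num) hξ2.le hξ hx hne
  have hD : 0 < log (log a / log (log a)) :=
    log_div_log_pos ((one_le_criticalFn_two (by norm_num)).trans_lt hL)
  have hξ1 : 0 < ξ - 1 := by linarith
  refine ⟨ξ, hξ2, fun x hx ↦ ?_, fun ξ' hξ' hle ↦ ?_, ?_, ?_⟩
  · rw [hf ξ hξ2.le, hf x hx, exp_le_exp]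
    rcases eq_or_ne x ξ with rfl | hne
    exacts [le_rfl, (hmin x hx hne).le]
  · by_contra hne
    have := hle ξ hξ2.le
    rw [hf ξ hξ2.le, hf ξ' hξ', exp_le_exp] at this
    exact (hmin ξ' hξ' hne).not_ge this
  · rw [← hξ] at hD ⊢
    linarith [(sqrt_two_mul_div_lt_iff (L := criticalFn 2904 ξ) hξ1 (by linarith) rfl).2
      (two_mul_lt_log_div_log_criticalFn_add_twentyone hξ2)]
  · rw [← hξ] at hD ⊢
    linarith [(lt_sqrt_two_mul_div_iff (L := criticalFn 2904 ξ) hξ1 (by linarith) rfl).2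
      (log_div_log_criticalFn_add_sixteen_lt hξ2)]
end

section
/- Let $a > 15788$ be a real number, let $f(x) = (2904 x)^x a^{x/(x-1)}$, and let $m_0 := \left\lfloor \sqrt{\frac{2 \log a}{\log\log a - \log\log\log a + 16}} + 2 \right\rfloor$. Then $f(m_0) \leq a^{1 + \frac{183}{\log\log a}}$. -/
/-!
Taking logarithms, with `L = log a` and `ℓ = log L` the claim becomes
`m log (2904 m) + L m / (m - 1) ≤ L + 183 L / ℓ`, and `m / (m - 1) = 1 + 1 / (m - 1)`.
Write `L = t ^ 4`. Since `m ≤ √(2L/17) + 2 ≤ 2 t ^ 2` and `ℓ = 4 log t ≤ 4 t`, we get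
`m log (2904 m) ≤ 2 t ^ 2 (9 + ℓ / 2) ≤ 60 L / ℓ`. On the other side `m - 1 > √(2L/D)` with
`D = ℓ - log ℓ + 16 ≤ ℓ + 16`, and `ℓ ^ 2 (ℓ + 16) ≤ 200 t ^ 4` gives `√(2L/D) ≥ ℓ / 10`;
hence `L / (m - 1) ≤ 10 L / ℓ`, and `60 + 10 ≤ 183`.
-/

open Real

theorem exp_nine_gt : 5808 < exp 9 := by
  calc (5808 : ℝ) < 2.7182818283 ^ 9 := by norm_num
    _ < exp 1 ^ 9 := pow_lt_pow_left₀ exp_one_gt_d9 (by norm_num) (by norm_num)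
    _ = exp 9 := by norm_num

theorem exp_nine_lt : exp 9 < 15788 := by
  calc exp 9 = exp 1 ^ 9 := by norm_num
    _ < 2.7182818286 ^ 9 := pow_lt_pow_left₀ exp_one_lt_d9 (exp_pos 1).le (by norm_num)
    _ < 15788 := by norm_num

section

variable {t D m : ℝ}

theorem log_pow_four_le (ht : 0 < t) : log (t ^ 4) ≤ 4 * t := by
  rw [log_pow]
  push_cast
  linarith [log_le_sub_one_of_pos ht]

theorem le_two_mul_sq (ht : 3 ≤ t ^ 2) (hD : 2 ≤ D) (hm : m ≤ √(2 * t ^ 4 / D) + 2) :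
    m ≤ 2 * t ^ 2 := by
  have : √(2 * t ^ 4 / D) ≤ t ^ 2 := by
    rw [sqrt_le_left (by positivity), div_le_iff₀ (by positivity)]
    nlinarith [pow_nonneg (sq_nonneg t) 2]
  linarith

theorem log_mul_mul_le (ht0 : 0 < t) (ht : 3 ≤ t ^ 2) (hm : 1 ≤ m) (hmt : m ≤ 2 * t ^ 2) :
    log (2904 * m) * m ≤ 60 * t ^ 4 / log (t ^ 4) := by
  set l := log (t ^ 4)
  have hl : 0 < l := log_pos (by nlinarith)
  have hlt : l ≤ 4 * t := log_pow_four_le ht0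
  have hlog : log (2904 * m) ≤ 9 + l / 2 := calc
    log (2904 * m) ≤ log (5808 * t ^ 2) := log_le_log (by positivity) (by linarith)
    _ = log 5808 + l / 2 := by
      rw [log_mul (by norm_num) (by positivity)]
      simp only [l, log_pow]
      push_cast
      ring
    _ ≤ 9 + l / 2 := by
      gcongr; exact (log_le_iff_le_exp (by norm_num)).2 exp_nine_gt.le
  have ht' : 1.7 ≤ t := by nlinarith
  have hpoly : 9 * l + l ^ 2 / 2 ≤ 30 * t ^ 2 := by nlinarith
  rw [le_div_iff₀ hl]
  calc log (2904 * m) * m * l ≤ (9 + l / 2) * (2 * t ^ 2) * l := by gcongr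
    _ ≤ 60 * t ^ 4 := by nlinarith

theorem log_le_mul_sqrt (ht0 : 0 < t) (ht : 3 ≤ t ^ 2) (hD : 0 < D)
    (hDl : D ≤ log (t ^ 4) + 16) : log (t ^ 4) ≤ 10 * √(2 * t ^ 4 / D) := by
  set l := log (t ^ 4)
  have hl : 0 < l := log_pos (by nlinarith)
  have hlt : l ≤ 4 * t := log_pow_four_le ht0
  have ht' : 1.7 ≤ t := by nlinarith
  have hcube : l ^ 2 * (l + 16) ≤ 16 * t ^ 2 * (4 * t + 16) :=
    mul_le_mul (by nlinarith) (by linarith) (by positivity) (by positivity)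
  have hpoly : l ^ 2 * (l + 16) ≤ 200 * t ^ 4 := by
    nlinarith [mul_le_mul_of_nonneg_left ht' (pow_nonneg ht0.le 3),
      mul_le_mul_of_nonneg_left ht (sq_nonneg t)]
  have hDl' : l ^ 2 * D ≤ l ^ 2 * (l + 16) := by gcongr
  rw [← div_le_iff₀' (by norm_num), le_sqrt (by positivity) (by positivity), le_div_iff₀ hD]
  nlinarith

theorem exponent_le {L : ℝ} (hL : 9 ≤ L) (hD : 17 ≤ D) (hDl : D ≤ log L + 16)
    (hm : √(2 * L / D) + 1 < m) (hm' : m ≤ √(2 * L / D) + 2) :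
    log (2904 * m) * m + L * (m / (m - 1)) ≤ L * (1 + 183 / log L) := by
  obtain ⟨t, ht0, rfl⟩ : ∃ t, 0 < t ∧ t ^ 4 = L :=
    ⟨L ^ (4⁻¹ : ℝ), by positivity, by rw [← rpow_natCast, ← rpow_mul] <;> norm_num; linarith⟩
  have ht : 3 ≤ t ^ 2 := by nlinarith
  have hl : 0 < log (t ^ 4) := log_pos (by linarith)
  have hM := sqrt_nonneg (2 * t ^ 4 / D)
  have hmain := log_mul_mul_le ht0 ht (by linarith) (le_two_mul_sq ht (by linarith) hm')
  have hsub : t ^ 4 / (m - 1) ≤ 10 * t ^ 4 / log (t ^ 4) := by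
    rw [div_le_div_iff₀ (by linarith) hl]
    nlinarith [log_le_mul_sqrt ht0 ht (by linarith) hDl]
  calc log (2904 * m) * m + t ^ 4 * (m / (m - 1))
      = log (2904 * m) * m + t ^ 4 / (m - 1) + t ^ 4 := by
        field_simp [show m - 1 ≠ 0 by linarith]; ring
    _ ≤ 60 * t ^ 4 / log (t ^ 4) + 10 * t ^ 4 / log (t ^ 4) + t ^ 4 := by gcongr
    _ ≤ t ^ 4 * 183 / log (t ^ 4) + t ^ 4 := by
      rw [← add_div]
      gcongr
      linarith [pow_pos ht0 4]
    _ = t ^ 4 * (1 + 183 / log (t ^ 4)) := by ring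

end

theorem stmt_17 (a : ℝ) (ha : 15788 < a) (m₀ : ℤ)
    (hm₀ : m₀ = ⌊Real.sqrt (2 * Real.log a /
      (Real.log (Real.log a) - Real.log (Real.log (Real.log a)) + 16)) + 2⌋) :
    Real.rpow (2904 * (m₀ : ℝ)) (m₀ : ℝ) *
      Real.rpow a ((m₀ : ℝ) / ((m₀ : ℝ) - 1)) ≤
    Real.rpow a (1 + 183 / Real.log (Real.log a)) := by
  have ha0 : 0 < a := by linarith
  have hL : 9 ≤ log a := (le_log_iff_exp_le ha0).2 (exp_nine_lt.le.trans ha.le)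
  have hl : 1 ≤ log (log a) := (le_log_iff_exp_le (by linarith)).2 (by linarith [exp_one_lt_d9])
  have hD : 17 ≤ log (log a) - log (log (log a)) + 16 := by
    linarith [log_le_sub_one_of_pos (by linarith : 0 < log (log a))]
  have hDl : log (log a) - log (log (log a)) + 16 ≤ log (log a) + 16 := by
    linarith [log_nonneg hl]
  set M := √(2 * log a / (log (log a) - log (log (log a)) + 16))
  have hm : M + 1 < m₀ := hm₀ ▸ (by linarith [Int.lt_floor_add_one (M + 2)])
  have hm' : (m₀ : ℝ) ≤ M + 2 := hm₀ ▸ Int.floor_le _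
  have h2904m : 0 < 2904 * (m₀ : ℝ) := by linarith [show 0 ≤ M from sqrt_nonneg _]
  change (2904 * (m₀ : ℝ)) ^ (m₀ : ℝ) * a ^ ((m₀ : ℝ) / (m₀ - 1)) ≤ a ^ (1 + 183 / log (log a))
  rw [rpow_def_of_pos h2904m, rpow_def_of_pos ha0, rpow_def_of_pos ha0, ← exp_add, exp_le_exp]
  exact exponent_le hL hD hDl hm hm'
end

section
/- Let $a \geq e^2$ be a real number, $r \geq 1$ an integer, and define $q : [2, \infty) \to \mathbb{R}$ by $q(x) = \left(x(x-1)(\log x + 9) + \frac{2}{r}(\log a)\, x\right) a^{x/(x-1)}$. Then: (i) $q(x) > 16 (\log a)^2 \, a$ for every $x \geq 2$; and (ii) for the integer $m_1 := \lfloor \frac{\log a}{2} + 2 \rfloor$ one has $q(m_1) < 2 (\log a)^2 (\log\log a + 82)\, a$. -/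
set_option maxHeartbeats 800000


theorem stmt_18 (a : ℝ) (ha : Real.exp 2 ≤ a) (r : ℕ) (hr : 1 ≤ r) :
    (∀ x : ℝ, 2 ≤ x →
      16 * Real.log a ^ 2 * a <
        (x * (x - 1) * (Real.log x + 9) + (2 / (r : ℝ)) * Real.log a * x) *
          Real.rpow a (x / (x - 1))) ∧
    (∀ m₁ : ℤ, m₁ = ⌊Real.log a / 2 + 2⌋ →
      ((m₁ : ℝ) * ((m₁ : ℝ) - 1) * (Real.log (m₁ : ℝ) + 9) +
          (2 / (r : ℝ)) * Real.log a * (m₁ : ℝ)) *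
        Real.rpow a ((m₁ : ℝ) / ((m₁ : ℝ) - 1)) <
      2 * Real.log a ^ 2 * (Real.log (Real.log a) + 82) * a) := by
  have ha0 : (0:ℝ) < a := lt_of_lt_of_le (Real.exp_pos 2) ha
  set L := Real.log a with hLdef
  have hL : 2 ≤ L := by
    have h := Real.log_le_log (Real.exp_pos 2) ha
    simpa [Real.log_exp] using h
  have haL : Real.exp L = a := Real.exp_log ha0
  have hr1 : (1:ℝ) ≤ (r:ℝ) := by exact_mod_cast hr
  have he1 : (2.7182818283:ℝ) < Real.exp 1 := Real.exp_one_gt_d9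
  have he1' : Real.exp 1 < 2.7182818286 := Real.exp_one_lt_d9
  have hexp2 : Real.exp 2 = Real.exp 1 * Real.exp 1 := by
    rw [← Real.exp_add]; norm_num
  have he2lo : (7.389:ℝ) < Real.exp 2 := by rw [hexp2]; nlinarith
  have he2hi : Real.exp 2 < 7.3890561 := by rw [hexp2]; nlinarith
  -- generic rpow rewrite
  have hrpow : ∀ x : ℝ, 0 < x - 1 →
      Real.rpow a (x / (x - 1)) = a * Real.exp (L / (x - 1)) := by
    intro x hx
    rw [show Real.rpow a (x / (x - 1)) = Real.exp (Real.log a * (x / (x - 1))) from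
        Real.rpow_def_of_pos ha0 _,
      show Real.log a * (x / (x - 1)) = L + L / (x - 1) by
        rw [← hLdef]; field_simp; ring,
      Real.exp_add, haL]
  -- key minimum bound
  have key : ∀ t : ℝ, 0 < t →
      L ^ 2 / 4 * Real.exp 2 ≤ t ^ 2 * Real.exp (L / t) := by
    intro t ht
    have hL0 : 0 < L := by linarith
    have hu : 0 < L / (2 * t) := by positivity
    have hlog : Real.log (L / (2 * t)) ≤ L / (2 * t) - 1 :=
      Real.log_le_sub_one_of_pos hu
    have h1 : 2 * Real.log (L / (2 * t)) + 2 ≤ L / t := by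
      have h : L / (2 * t) = L / t / 2 := by ring
      rw [h] at hlog ⊢
      linarith
    have h2 : Real.exp (2 * Real.log (L / (2 * t)) + 2) ≤ Real.exp (L / t) :=
      Real.exp_le_exp.2 h1
    have h3 : Real.exp (2 * Real.log (L / (2 * t)) + 2)
        = (L / (2 * t)) ^ 2 * Real.exp 2 := by
      rw [show (2:ℝ) * Real.log (L / (2 * t)) + 2
            = Real.log (L / (2 * t)) + (Real.log (L / (2 * t)) + 2) by ring,
        Real.exp_add, Real.exp_add, Real.exp_log hu]
      ring
    have h4 : t ^ 2 * ((L / (2 * t)) ^ 2 * Real.exp 2) = L ^ 2 / 4 * Real.exp 2 := by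
      field_simp
      ring
    nlinarith [mul_le_mul_of_nonneg_left h2 (sq_nonneg t)]
  constructor
  · intro x hx
    have ht0 : (0:ℝ) < x - 1 := by linarith
    have ht1 : (1:ℝ) ≤ x - 1 := by linarith
    have hlx : 0 ≤ Real.log x := Real.log_nonneg (by linarith)
    have hE : 0 < Real.exp (L / (x - 1)) := Real.exp_pos _
    have hpoly : 9 * (x - 1) ^ 2
        ≤ x * (x - 1) * (Real.log x + 9) + 2 / (r:ℝ) * L * x := by
      have h2r : 0 ≤ 2 / (r:ℝ) * L * x := by positivity
      nlinarith
    have hk := key (x - 1) ht0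
    rw [hrpow x ht0]
    have hL2a : 0 < L ^ 2 * a := by positivity
    calc 16 * L ^ 2 * a < 9 * (L ^ 2 / 4 * Real.exp 2) * a := by
          nlinarith [mul_lt_mul_of_pos_right
            (show (16:ℝ) < 9 * Real.exp 2 / 4 by linarith) hL2a]
      _ ≤ 9 * ((x - 1) ^ 2 * Real.exp (L / (x - 1))) * a := by
          nlinarith [mul_le_mul_of_nonneg_right hk (le_of_lt ha0)]
      _ = 9 * (x - 1) ^ 2 * (a * Real.exp (L / (x - 1))) := by ring
      _ ≤ (x * (x - 1) * (Real.log x + 9) + 2 / (r:ℝ) * L * x)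
            * (a * Real.exp (L / (x - 1))) :=
        mul_le_mul_of_nonneg_right hpoly (by positivity)
  · intro m₁ hm
    have h1 : (m₁:ℝ) ≤ L / 2 + 2 := by rw [hm]; exact Int.floor_le _
    have h2 : L / 2 + 2 < (m₁:ℝ) + 1 := by rw [hm]; exact Int.lt_floor_add_one _
    have hm3 : (3:ℝ) ≤ (m₁:ℝ) := by
      have h : (3:ℤ) ≤ m₁ := by
        rw [hm]; exact Int.le_floor.2 (by push_cast; linarith)
      exact_mod_cast h
    set m : ℝ := (m₁:ℝ) with hmdef
    have ht0 : (0:ℝ) < m - 1 := by linarith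
    have htL : L / 2 < m - 1 := by linarith
    have htU : m - 1 ≤ L / 2 + 1 := by linarith
    rw [hrpow m ht0]
    have hElt : Real.exp (L / (m - 1)) < Real.exp 2 := by
      apply Real.exp_lt_exp.2
      rw [div_lt_iff₀ ht0]; linarith
    have hS0 : 0 ≤ Real.log L := Real.log_nonneg (by linarith)
    have hSL : Real.log L ≤ L - 1 := Real.log_le_sub_one_of_pos (by linarith)
    have hlogm : Real.log m ≤ Real.log L + 0.5 := by
      have hm15 : m ≤ 1.5 * L := by linarith
      calc Real.log m ≤ Real.log (1.5 * L) :=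
            Real.log_le_log (by linarith) hm15
        _ = Real.log 1.5 + Real.log L :=
            Real.log_mul (by norm_num) (by linarith)
        _ ≤ Real.log L + 0.5 := by
            have := Real.log_le_sub_one_of_pos (show (0:ℝ) < 1.5 by norm_num)
            linarith
    have h2r : 2 / (r:ℝ) ≤ 2 := by
      rw [div_le_iff₀ (by linarith)]; nlinarith
    have h2r0 : 0 < 2 / (r:ℝ) := by positivity
    have hlm0 : 0 ≤ Real.log m := Real.log_nonneg (by linarith)
    -- bound the polynomial part
    have hA : m * (m - 1) ≤ (L / 2 + 2) * (L / 2 + 1) :=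
      mul_le_mul h1 htU (by linarith) (by linarith)
    have hB : Real.log m + 9 ≤ Real.log L + 9.5 := by linarith
    have hPoly : m * (m - 1) * (Real.log m + 9) + 2 / (r:ℝ) * L * m
        ≤ (L / 2 + 2) * (L / 2 + 1) * (Real.log L + 9.5) + 2 * L * (L / 2 + 2) := by
      have hfirst : m * (m - 1) * (Real.log m + 9)
          ≤ (L / 2 + 2) * (L / 2 + 1) * (Real.log L + 9.5) := by
        exact mul_le_mul hA hB (by linarith) (mul_nonneg (by linarith) (by linarith))
      have hsecond : 2 / (r:ℝ) * L * m ≤ 2 * L * (L / 2 + 2) := by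
        have hc : 2 / (r:ℝ) * L ≤ 2 * L := by nlinarith
        have hc0 : 0 ≤ 2 / (r:ℝ) * L := by positivity
        exact mul_le_mul hc h1 (by linarith) (by linarith)
      linarith
    have hPolyPos : 0 < m * (m - 1) * (Real.log m + 9) + 2 / (r:ℝ) * L * m := by
      have hp : 0 < 2 / (r:ℝ) * L * m := by positivity
      nlinarith [mul_nonneg (mul_nonneg (show (0:ℝ) ≤ m by linarith)
        (show (0:ℝ) ≤ m - 1 by linarith)) (show (0:ℝ) ≤ Real.log m + 9 by linarith)]
    -- final numeric bound
    have hfinal : ((L / 2 + 2) * (L / 2 + 1) * (Real.log L + 9.5)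
        + 2 * L * (L / 2 + 2)) * 7.3890561 ≤ 2 * L ^ 2 * (Real.log L + 82) := by
      nlinarith [mul_nonneg (show (0:ℝ) ≤ L by linarith) (show 0 ≤ L - 1 - Real.log L by linarith),
        mul_nonneg (show (0:ℝ) ≤ L - 2 by linarith) hS0,
        mul_nonneg (mul_nonneg (show (0:ℝ) ≤ L by linarith) (show (0:ℝ) ≤ L - 2 by linarith)) hS0,
        sq_nonneg (L - 2)]
    have hEhi : Real.exp (L / (m - 1)) < 7.3890561 := lt_trans hElt he2hi
    calc (m * (m - 1) * (Real.log m + 9) + 2 / (r:ℝ) * L * m)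
          * (a * Real.exp (L / (m - 1)))
        < (m * (m - 1) * (Real.log m + 9) + 2 / (r:ℝ) * L * m) * (a * 7.3890561) := by
          apply mul_lt_mul_of_pos_left _ hPolyPos
          exact mul_lt_mul_of_pos_left hEhi ha0
      _ ≤ ((L / 2 + 2) * (L / 2 + 1) * (Real.log L + 9.5) + 2 * L * (L / 2 + 2))
            * (a * 7.3890561) :=
          mul_le_mul_of_nonneg_right hPoly (by positivity)
      _ ≤ 2 * L ^ 2 * (Real.log L + 82) * a := by nlinarith
end
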